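/- arXiv:2006.13875 — 3 statements merged into one kernel-verified Lean document; each statement's English description precedes it below -/
import Mathlib

section
/- For every fixed Δ ∈ ℝ, the BC bridge function r ↦ F(r,Δ) is twice differentiable on (−1,1) with second derivative ∂²F/∂r² (r,Δ) = φ₂(Δ, 0; r/√2) · (2√2 · r / (2−r²)²) · (2 − r² − 2Δ²). -/
/-!
Conditioning on the first coordinate gives `Φ₂(a, 0; ρ) = ∫_{-∞}^a φ(x) Φ(c x) dx` with
`c = -ρ / √(1 - ρ²)`. Differentiating under the integral sign in `c` leaves the Gaussian integral
`∫_{-∞}^a x φ(x) φ(c x) dx`, which is elementary; combined with the chain rule this is Plackett's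
identity `∂Φ₂(a, 0; ρ)/∂ρ = φ₂(a, 0; ρ)`. Hence `∂F/∂r = 2√2 φ₂(Δ, 0; r/√2)`, and the second
derivative comes from differentiating `φ₂(a, 0; ρ) = (2π√(1 - ρ²))⁻¹ exp(-a² / (2(1 - ρ²)))`.
-/

open Real MeasureTheory

/-- Standard normal density. -/
noncomputable def stdPdf (x : ℝ) : ℝ :=
  (Real.sqrt (2 * Real.pi))⁻¹ * Real.exp (-x ^ 2 / 2)

/-- Standard normal cdf. -/
noncomputable def stdCdf (x : ℝ) : ℝ :=
  ∫ t in Set.Iic x, stdPdf t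

/-- Bivariate standard normal density with correlation `ρ`. -/
noncomputable def pdf2 (x₁ x₂ ρ : ℝ) : ℝ :=
  (2 * Real.pi * Real.sqrt (1 - ρ ^ 2))⁻¹ *
    Real.exp (-(x₁ ^ 2 - 2 * ρ * x₁ * x₂ + x₂ ^ 2) / (2 * (1 - ρ ^ 2)))

/-- Bivariate standard normal cdf. -/
noncomputable def cdf2 (a b ρ : ℝ) : ℝ :=
  ∫ x₁ in Set.Iic a, ∫ x₂ in Set.Iic b, pdf2 x₁ x₂ ρ

/-- The BC-case bridge function `F(r,Δ) = 4Φ₂(Δ,0;r/√2) − 2Φ(Δ)`. -/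
noncomputable def FBC (r Δ : ℝ) : ℝ :=
  4 * cdf2 Δ 0 (r / Real.sqrt 2) - 2 * stdCdf Δ

open Set Filter Topology ProbabilityTheory

lemma stdPdf_eq_gaussianPDFReal : stdPdf = gaussianPDFReal 0 1 := by
  ext x
  simp [stdPdf, gaussianPDFReal]

lemma stdPdf_nonneg (x : ℝ) : 0 ≤ stdPdf x := by
  rw [stdPdf_eq_gaussianPDFReal]; exact gaussianPDFReal_nonneg _ _ _

lemma stdPdf_le (x : ℝ) : stdPdf x ≤ (√(2 * π))⁻¹ :=
  mul_le_of_le_one_right (by positivity) (exp_le_one_iff.2 (by nlinarith [sq_nonneg x]))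

lemma continuous_stdPdf : Continuous stdPdf := by
  unfold stdPdf; fun_prop

lemma integrable_stdPdf : Integrable stdPdf := by
  rw [stdPdf_eq_gaussianPDFReal]; exact integrable_gaussianPDFReal _ _

lemma integral_stdPdf : ∫ x, stdPdf x = 1 := by
  rw [stdPdf_eq_gaussianPDFReal]; exact integral_gaussianPDFReal_eq_one _ one_ne_zero

lemma hasDerivAt_stdCdf (x : ℝ) : HasDerivAt stdCdf (stdPdf x) x := by
  have hsplit : stdCdf = fun y => stdCdf 0 + ∫ t in (0 : ℝ)..y, stdPdf t := by
    ext y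
    rw [stdCdf, stdCdf, ← intervalIntegral.integral_Iic_sub_Iic integrable_stdPdf.integrableOn
      integrable_stdPdf.integrableOn]
    ring
  rw [hsplit]
  exact ((continuous_stdPdf.integral_hasStrictDerivAt 0 x).hasDerivAt).const_add _

lemma continuous_stdCdf : Continuous stdCdf :=
  continuous_iff_continuousAt.2 fun x => (hasDerivAt_stdCdf x).continuousAt

lemma stdCdf_nonneg (x : ℝ) : 0 ≤ stdCdf x :=
  setIntegral_nonneg measurableSet_Iic fun t _ => stdPdf_nonneg t

lemma stdCdf_le_one (x : ℝ) : stdCdf x ≤ 1 :=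
  integral_stdPdf ▸ setIntegral_le_integral integrable_stdPdf (.of_forall stdPdf_nonneg)

lemma integral_Iic_mul_exp_neg_mul_sq {b : ℝ} (hb : 0 < b) (a : ℝ) :
    ∫ x in Iic a, x * exp (-b * x ^ 2) = -(2 * b)⁻¹ * exp (-b * a ^ 2) := by
  have hderiv : ∀ x ∈ Iic a,
      HasDerivAt (fun x => -(2 * b)⁻¹ * exp (-b * x ^ 2)) (x * exp (-b * x ^ 2)) x := by
    intro x _
    refine ((((hasDerivAt_pow 2 x).const_mul (-b)).exp).const_mul (-(2 * b)⁻¹)).congr_deriv ?_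
    field_simp
    ring
  have hsq : Tendsto (fun x : ℝ => x ^ 2) atBot atTop := by
    simpa [Function.comp_def] using
      (tendsto_pow_atTop (α := ℝ) two_ne_zero).comp tendsto_neg_atBot_atTop
  have hlim : Tendsto (fun x => -(2 * b)⁻¹ * exp (-b * x ^ 2)) atBot (𝓝 0) := by
    simpa using (tendsto_exp_atBot.comp
      ((tendsto_const_mul_atBot_of_neg (neg_lt_zero.2 hb)).2 hsq)).const_mul (-(2 * b)⁻¹)
  rw [integral_Iic_of_hasDerivAt_of_tendsto' hderiv
    (integrable_mul_exp_neg_mul_sq hb).integrableOn hlim, sub_zero]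

lemma setIntegral_Iic_comp_sub_div (f : ℝ → ℝ) (m b : ℝ) {σ : ℝ} (hσ : 0 < σ) :
    ∫ x in Iic b, f ((x - m) / σ) = σ * ∫ y in Iic ((b - m) / σ), f y := by
  rw [← integral_indicator measurableSet_Iic, ← integral_indicator measurableSet_Iic]
  have hind : (Iic b).indicator (fun x => f ((x - m) / σ))
      = fun x => (Iic ((b - m) / σ)).indicator f ((x - m) / σ) := by
    ext x
    simp only [indicator, mem_Iic, div_le_div_iff_of_pos_right hσ, sub_le_sub_iff_right]
  rw [hind, integral_sub_right_eq_self (fun x => (Iic ((b - m) / σ)).indicator f (x / σ)) m,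
    Measure.integral_comp_div, abs_of_pos hσ, smul_eq_mul]

lemma one_sub_sq_pos {ρ : ℝ} (hρ : ρ ∈ Ioo (-1) 1) : 0 < 1 - ρ ^ 2 := by
  nlinarith [hρ.1, hρ.2]

lemma pdf2_eq_stdPdf_mul {ρ : ℝ} (hρ : ρ ∈ Ioo (-1) 1) (x₁ x₂ : ℝ) :
    pdf2 x₁ x₂ ρ =
      stdPdf x₁ * ((√(1 - ρ ^ 2))⁻¹ * stdPdf ((x₂ - ρ * x₁) / √(1 - ρ ^ 2))) := by
  have h1ρ : 0 < 1 - ρ ^ 2 := one_sub_sq_pos hρ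
  have hexp : -(x₁ ^ 2 - 2 * ρ * x₁ * x₂ + x₂ ^ 2) / (2 * (1 - ρ ^ 2))
      = -x₁ ^ 2 / 2 + -((x₂ - ρ * x₁) / √(1 - ρ ^ 2)) ^ 2 / 2 := by
    rw [div_pow, sq_sqrt h1ρ.le]
    field_simp
    ring
  have h2π : √(2 * π) ^ 2 = 2 * π := sq_sqrt (by positivity)
  rw [pdf2, stdPdf, stdPdf, hexp, exp_add]
  field_simp
  rw [h2π]

lemma setIntegral_Iic_pdf2 {ρ : ℝ} (hρ : ρ ∈ Ioo (-1) 1) (x₁ b : ℝ) :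
    ∫ x₂ in Iic b, pdf2 x₁ x₂ ρ = stdPdf x₁ * stdCdf ((b - ρ * x₁) / √(1 - ρ ^ 2)) := by
  have hσ : 0 < √(1 - ρ ^ 2) := sqrt_pos.2 (one_sub_sq_pos hρ)
  simp_rw [pdf2_eq_stdPdf_mul hρ, integral_const_mul,
    setIntegral_Iic_comp_sub_div stdPdf _ _ hσ, inv_mul_cancel_left₀ hσ.ne', stdCdf]

lemma cdf2_eq_setIntegral {ρ : ℝ} (hρ : ρ ∈ Ioo (-1) 1) (a b : ℝ) :
    cdf2 a b ρ = ∫ x in Iic a, stdPdf x * stdCdf ((b - ρ * x) / √(1 - ρ ^ 2)) := by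
  simp_rw [cdf2, setIntegral_Iic_pdf2 hρ]

lemma stdPdf_mul_stdPdf_mul (c x : ℝ) :
    stdPdf x * stdPdf (c * x) = (2 * π)⁻¹ * exp (-((1 + c ^ 2) / 2) * x ^ 2) := by
  rw [stdPdf, stdPdf, mul_mul_mul_comm, ← exp_add, ← mul_inv, mul_self_sqrt (by positivity)]
  ring_nf

lemma hasDerivAt_setIntegral_stdPdf_mul_stdCdf_mul (a c : ℝ) :
    HasDerivAt (fun c => ∫ x in Iic a, stdPdf x * stdCdf (c * x))
      (-(2 * π * (1 + c ^ 2))⁻¹ * exp (-((1 + c ^ 2) / 2) * a ^ 2)) c := by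
  have hcont : ∀ c : ℝ, Continuous fun x => stdPdf x * stdCdf (c * x) := fun c =>
    continuous_stdPdf.mul (continuous_stdCdf.comp (continuous_const_mul c))
  have hbound : Integrable fun x : ℝ => stdPdf x * ((√(2 * π))⁻¹ * |x|) := by
    refine ((integrable_mul_exp_neg_mul_sq (b := 1 / 2) (by norm_num)).abs.const_mul
      ((√(2 * π))⁻¹ * (√(2 * π))⁻¹)).congr (.of_forall fun x => ?_)
    simp only [stdPdf, abs_mul, abs_of_pos (exp_pos _)]
    ring_nf
  obtain ⟨-, hderiv⟩ := hasDerivAt_integral_of_dominated_loc_of_deriv_le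
    (μ := volume.restrict (Iic a)) (x₀ := c) (s := univ)
    (F' := fun c x => stdPdf x * (stdPdf (c * x) * x)) univ_mem
    (.of_forall fun c => (hcont c).aestronglyMeasurable)
    ((integrable_stdPdf.restrict).mono (hcont c).aestronglyMeasurable (.of_forall fun x => by
      simpa [abs_of_nonneg (stdPdf_nonneg x), abs_of_nonneg (stdCdf_nonneg (c * x))] using
        mul_le_of_le_one_right (stdPdf_nonneg x) (stdCdf_le_one (c * x))))
    (continuous_stdPdf.mul
      ((continuous_stdPdf.comp (continuous_const_mul c)).mul continuous_id)).aestronglyMeasurable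
    (.of_forall fun x c _ => by
      rw [norm_mul, norm_mul, Real.norm_of_nonneg (stdPdf_nonneg x),
        Real.norm_of_nonneg (stdPdf_nonneg _), Real.norm_eq_abs]
      gcongr
      · exact stdPdf_nonneg x
      · exact stdPdf_le _)
    hbound.restrict
    (.of_forall fun x c _ =>
      (HasDerivAt.comp c (hasDerivAt_stdCdf (c * x)) (hasDerivAt_mul_const x)).const_mul _)
  have hintegrand : ∀ x, stdPdf x * (stdPdf (c * x) * x)
      = (2 * π)⁻¹ * (x * exp (-((1 + c ^ 2) / 2) * x ^ 2)) := fun x => by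
    rw [← mul_assoc, stdPdf_mul_stdPdf_mul]; ring
  simp_rw [hintegrand, integral_const_mul, integral_Iic_mul_exp_neg_mul_sq
    (b := (1 + c ^ 2) / 2) (by positivity)] at hderiv
  exact hderiv.congr_deriv (by field_simp)

lemma hasDerivAt_sqrt_one_sub_sq {ρ : ℝ} (hρ : ρ ∈ Ioo (-1) 1) :
    HasDerivAt (fun ρ => √(1 - ρ ^ 2)) (-ρ / √(1 - ρ ^ 2)) ρ := by
  refine (((hasDerivAt_pow 2 ρ).const_sub 1).sqrt (one_sub_sq_pos hρ).ne').congr_deriv ?_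
  field_simp
  ring

lemma hasDerivAt_neg_div_sqrt_one_sub_sq {ρ : ℝ} (hρ : ρ ∈ Ioo (-1) 1) :
    HasDerivAt (fun ρ => -ρ / √(1 - ρ ^ 2)) (-(√(1 - ρ ^ 2) ^ 3)⁻¹) ρ := by
  have h1ρ : 0 < 1 - ρ ^ 2 := one_sub_sq_pos hρ
  have hσ : 0 < √(1 - ρ ^ 2) := sqrt_pos.2 h1ρ
  refine ((hasDerivAt_neg ρ).div (hasDerivAt_sqrt_one_sub_sq hρ) hσ.ne').congr_deriv ?_
  field_simp
  linear_combination -sq_sqrt h1ρ.le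

lemma pdf2_zero_right (a ρ : ℝ) :
    pdf2 a 0 ρ = (2 * π * √(1 - ρ ^ 2))⁻¹ * exp (-a ^ 2 / (2 * (1 - ρ ^ 2))) := by
  simp [pdf2]

lemma hasDerivAt_cdf2_zero_right (a : ℝ) {ρ : ℝ} (hρ : ρ ∈ Ioo (-1) 1) :
    HasDerivAt (fun ρ => cdf2 a 0 ρ) (pdf2 a 0 ρ) ρ := by
  have h1ρ : 0 < 1 - ρ ^ 2 := one_sub_sq_pos hρ
  have hlocal : (fun ρ => cdf2 a 0 ρ) =ᶠ[𝓝 ρ]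
      (fun c => ∫ x in Iic a, stdPdf x * stdCdf (c * x)) ∘ fun ρ => -ρ / √(1 - ρ ^ 2) := by
    filter_upwards [isOpen_Ioo.mem_nhds hρ] with ρ' hρ'
    simp only [cdf2_eq_setIntegral hρ', Function.comp_apply, zero_sub, neg_mul, neg_div,
      mul_div_right_comm]
  rw [hlocal.hasDerivAt_iff]
  refine ((hasDerivAt_setIntegral_stdPdf_mul_stdCdf_mul a _).comp ρ
    (hasDerivAt_neg_div_sqrt_one_sub_sq hρ)).congr_deriv ?_
  have hshape : 1 + (-ρ / √(1 - ρ ^ 2)) ^ 2 = (√(1 - ρ ^ 2) ^ 2)⁻¹ := by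
    rw [div_pow, sq_sqrt h1ρ.le]
    field_simp
    ring
  rw [pdf2_zero_right]
  set σ := √(1 - ρ ^ 2)
  rw [hshape, show 1 - ρ ^ 2 = σ ^ 2 from (sq_sqrt h1ρ.le).symm]
  field_simp

lemma hasDerivAt_pdf2_zero_right (a : ℝ) {ρ : ℝ} (hρ : ρ ∈ Ioo (-1) 1) :
    HasDerivAt (fun ρ => pdf2 a 0 ρ)
      (pdf2 a 0 ρ * (ρ * (1 - ρ ^ 2 - a ^ 2) / (1 - ρ ^ 2) ^ 2)) ρ := by
  have h1ρ : 0 < 1 - ρ ^ 2 := one_sub_sq_pos hρ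
  simp_rw [pdf2_zero_right]
  refine ((((hasDerivAt_sqrt_one_sub_sq hρ).const_mul (2 * π)).inv (by positivity)).mul
    ((hasDerivAt_const ρ (-a ^ 2)).div (((hasDerivAt_pow 2 ρ).const_sub 1).const_mul 2)
      (by positivity)).exp).congr_deriv ?_
  simp only [Pi.div_apply, Pi.inv_apply]
  set σ := √(1 - ρ ^ 2)
  rw [show 1 - ρ ^ 2 = σ ^ 2 from (sq_sqrt h1ρ.le).symm]
  field_simp
  ring

lemma div_sqrt_two_mem_Ioo {r : ℝ} (hr : r ∈ Ioo (-√2) √2) : r / √2 ∈ Ioo (-1) 1 := by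
  have h2 : 0 < √2 := by positivity
  constructor
  · rw [lt_div_iff₀ h2]; linarith [hr.1]
  · rw [div_lt_one h2]; exact hr.2

lemma hasDerivAt_FBC (Δ : ℝ) {r : ℝ} (hr : r ∈ Ioo (-√2) √2) :
    HasDerivAt (fun r => FBC r Δ) (4 * pdf2 Δ 0 (r / √2) / √2) r := by
  refine ((((hasDerivAt_cdf2_zero_right Δ (div_sqrt_two_mem_Ioo hr)).comp r
    ((hasDerivAt_id r).div_const √2)).const_mul 4).sub_const (2 * stdCdf Δ)).congr_deriv ?_
  ring

/-- The BC bridge function is twice differentiable in `r` on `(−1,1)`, with second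
derivative `φ₂(Δ,0;r/√2) · (2√2·r/(2−r²)²) · (2 − r² − 2Δ²)`. -/
theorem FBC_second_deriv_r (Δ : ℝ) :
    (∀ r ∈ Set.Ioo (-1 : ℝ) 1, DifferentiableAt ℝ (fun r => FBC r Δ) r) ∧
    (∀ r ∈ Set.Ioo (-1 : ℝ) 1,
      HasDerivAt (deriv fun r => FBC r Δ)
        (pdf2 Δ 0 (r / Real.sqrt 2) * (2 * Real.sqrt 2 * r / (2 - r ^ 2) ^ 2) *
          (2 - r ^ 2 - 2 * Δ ^ 2)) r) := by
  have hsub : Ioo (-1 : ℝ) 1 ⊆ Ioo (-√2) √2 :=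
    Ioo_subset_Ioo (neg_le_neg one_lt_sqrt_two.le) one_lt_sqrt_two.le
  refine ⟨fun r hr => (hasDerivAt_FBC Δ (hsub hr)).differentiableAt, fun r hr => ?_⟩
  have hderiv : deriv (fun r => FBC r Δ) =ᶠ[𝓝 r] fun r => 4 * pdf2 Δ 0 (r / √2) / √2 := by
    filter_upwards [isOpen_Ioo.mem_nhds (hsub hr)] with r hr using (hasDerivAt_FBC Δ hr).deriv
  rw [hderiv.hasDerivAt_iff]
  refine ((((hasDerivAt_pdf2_zero_right Δ (div_sqrt_two_mem_Ioo (hsub hr))).comp r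
    ((hasDerivAt_id r).div_const √2)).const_mul 4).div_const √2).congr_deriv ?_
  have hsq2 : √2 ^ 2 = 2 := sq_sqrt zero_le_two
  simp only [div_pow, hsq2]
  field_simp
  rw [show √2 ^ 4 = (√2 ^ 2) ^ 2 by ring, hsq2]
  ring
end

section
/- For every r ∈ (−1,1) and Δ ∈ ℝ, ∫_{−∞}^0 φ₃(−Δ, t, 0; Σ₃(r)) dt = φ₂(−Δ, 0; r/√2) · Φ( Δ·√( 2(1−r²)/(2−r²) ) ). -/
open Real MeasureTheory Matrix

/-- The 3×3 correlation matrix Σ₃(r). -/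
noncomputable def Sigma3 (r : ℝ) : Matrix (Fin 3) (Fin 3) ℝ :=
  !![1, 1 / Real.sqrt 2, r / Real.sqrt 2;
     1 / Real.sqrt 2, 1, r;
     r / Real.sqrt 2, r, 1]

/-- Trivariate normal density with covariance Σ₃(r):
`(2π)^{-3/2} (det Σ₃(r))^{-1/2} exp(−½ xᵀ Σ₃(r)⁻¹ x)`. -/
noncomputable def pdf3 (r : ℝ) (x : Fin 3 → ℝ) : ℝ :=
  (Real.sqrt ((2 * Real.pi) ^ 3 * (Sigma3 r).det))⁻¹ *
    Real.exp (-(1 / 2) * (x ⬝ᵥ (Sigma3 r)⁻¹.mulVec x))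

/-- Trivariate normal cdf with covariance Σ₃(r). -/
noncomputable def cdf3 (a b c r : ℝ) : ℝ :=
  ∫ x₁ in Set.Iic a, ∫ x₂ in Set.Iic b, ∫ x₃ in Set.Iic c, pdf3 r ![x₁, x₂, x₃]

/-- The TC-case bridge function `F(r,Δ) = −2Φ₂(−Δ,0;1/√2) + 4Φ₃(−Δ,0,0;Σ₃(r))`. -/
noncomputable def FTC (r Δ : ℝ) : ℝ :=
  -2 * cdf2 (-Δ) 0 (1 / Real.sqrt 2) + 4 * cdf3 (-Δ) 0 0 r

/-!
Put `a = (2 - r²)/(1 - r²)`. Along the line `x = (-Δ, t, 0)` the quadratic form of `Σ₃(r)⁻¹` is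
`2Δ² + 2√2 Δ t + a t²`; completing the square in `t` splits it as `Δ²/(1 - r²/2) + (√a t + b)²`
with `√a b = √2 Δ`. The first term is the exponent of `φ₂(-Δ, 0; r/√2)`, and the normalising
constants match, so the integrand is `φ₂(-Δ, 0; r/√2) · √a · φ(√a t + b)`; the substitution
`s = √a t + b` turns its integral over `t ≤ 0` into `φ₂(-Δ, 0; r/√2) · Φ(b)`.
-/

theorem integral_Iic_zero_stdPdf_mul_add {c : ℝ} (hc : 0 < c) (b : ℝ) :
    ∫ t in Set.Iic (0 : ℝ), stdPdf (c * t + b) = c⁻¹ * stdCdf b := by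
  have hind : ∀ t : ℝ, (Set.Iic 0).indicator (fun t => stdPdf (c * t + b)) t =
      (Set.Iic b).indicator stdPdf (c * t + b) := fun t => by
    have hiff : c * t + b ≤ b ↔ t ≤ 0 := by constructor <;> intro h <;> nlinarith
    simp only [Set.indicator_apply, Set.mem_Iic, hiff]
  rw [stdCdf, ← integral_indicator measurableSet_Iic, ← integral_indicator measurableSet_Iic]
  simp_rw [hind]
  rw [Measure.integral_comp_mul_left (fun s => (Set.Iic b).indicator stdPdf (s + b)),
    integral_add_right_eq_self, abs_of_pos (inv_pos.mpr hc), smul_eq_mul]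

theorem Sigma3_det (r : ℝ) : (Sigma3 r).det = (1 - r ^ 2) / 2 := by
  simp [Sigma3, det_fin_three]
  grind

theorem Sigma3_inv {r : ℝ} (hr : 1 - r ^ 2 ≠ 0) :
    (Sigma3 r)⁻¹ = !![2, -√2, 0;
                      -√2, (2 - r ^ 2) / (1 - r ^ 2), -r / (1 - r ^ 2);
                      0, -r / (1 - r ^ 2), (1 - r ^ 2)⁻¹] := by
  apply inv_eq_right_inv
  ext i j
  fin_cases i <;> fin_cases j <;> simp [Sigma3, mul_apply, Fin.sum_univ_three] <;> grind

theorem dotProduct_Sigma3_inv_mulVec {r : ℝ} (hr : 1 - r ^ 2 ≠ 0) (Δ t : ℝ) :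
    ![-Δ, t, 0] ⬝ᵥ (Sigma3 r)⁻¹ *ᵥ ![-Δ, t, 0] =
      2 * Δ ^ 2 + 2 * √2 * Δ * t + (2 - r ^ 2) / (1 - r ^ 2) * t ^ 2 := by
  rw [Sigma3_inv hr]
  simp [mulVec, dotProduct, Fin.sum_univ_three]
  ring

theorem pdf3_eq_pdf2_mul_stdPdf {r : ℝ} (hr : r ^ 2 < 1) (Δ t : ℝ) :
    pdf3 r ![-Δ, t, 0] =
      pdf2 (-Δ) 0 (r / √2) * √((2 - r ^ 2) / (1 - r ^ 2)) *
        stdPdf (√((2 - r ^ 2) / (1 - r ^ 2)) * t + Δ * √(2 * (1 - r ^ 2) / (2 - r ^ 2))) := by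
  have h1 : 0 < 1 - r ^ 2 := by linarith
  have h2 : 0 < 2 - r ^ 2 := by linarith
  set a := (2 - r ^ 2) / (1 - r ^ 2) with ha
  set c := √a
  set b := Δ * √(2 * (1 - r ^ 2) / (2 - r ^ 2))
  have hc2 : c ^ 2 = a := sq_sqrt (by positivity)
  have hb2 : b ^ 2 = Δ ^ 2 * (2 * (1 - r ^ 2) / (2 - r ^ 2)) := by
    rw [mul_pow, sq_sqrt (by positivity)]
  have hcb : c * b = √2 * Δ := by
    rw [mul_left_comm, ← sqrt_mul (by positivity), ha,
      show (2 - r ^ 2) / (1 - r ^ 2) * (2 * (1 - r ^ 2) / (2 - r ^ 2)) = 2 by field_simp, mul_comm]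
  have hρ : 1 - (r / √2) ^ 2 = (2 - r ^ 2) / 2 := by
    rw [div_pow, sq_sqrt zero_le_two]
    ring
  have hexp : -(1 / 2) * (2 * Δ ^ 2 + 2 * √2 * Δ * t + a * t ^ 2) =
      -((-Δ) ^ 2 - 2 * (r / √2) * -Δ * 0 + 0 ^ 2) / (2 * (1 - (r / √2) ^ 2)) +
        -(c * t + b) ^ 2 / 2 := by
    rw [hρ]
    linear_combination (norm := skip) (t ^ 2 / 2) * hc2 + t * hcb + (1 / 2) * hb2
    field_simp
    ring
  have hconst : (√((2 * π) ^ 3 * ((1 - r ^ 2) / 2)))⁻¹ =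
      (2 * π * √(1 - (r / √2) ^ 2))⁻¹ * c * (√(2 * π))⁻¹ := by
    rw [← sq_eq_sq₀ (by positivity) (by positivity), hρ]
    simp only [inv_pow, mul_pow, hc2, ha]
    rw [sq_sqrt (by positivity), sq_sqrt (by positivity), sq_sqrt (by positivity)]
    field_simp
  rw [pdf3, pdf2, stdPdf, Sigma3_det, dotProduct_Sigma3_inv_mulVec h1.ne', hexp, exp_add, hconst]
  ring

/-- Marginalization identity:
`∫_{−∞}^0 φ₃(−Δ,t,0;Σ₃(r)) dt = φ₂(−Δ,0;r/√2)·Φ(Δ·√(2(1−r²)/(2−r²)))`. -/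
theorem pdf3_partial_integral_middle (r : ℝ) (hr : r ∈ Set.Ioo (-1 : ℝ) 1) (Δ : ℝ) :
    ∫ t in Set.Iic (0 : ℝ), pdf3 r ![-Δ, t, 0] =
      pdf2 (-Δ) 0 (r / Real.sqrt 2) *
        stdCdf (Δ * Real.sqrt (2 * (1 - r ^ 2) / (2 - r ^ 2))) := by
  have hr2 : r ^ 2 < 1 := (sq_lt_one_iff_abs_lt_one r).mpr (abs_lt.mpr hr)
  have hc : 0 < √((2 - r ^ 2) / (1 - r ^ 2)) := sqrt_pos.mpr (div_pos (by linarith) (by linarith))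
  simp_rw [pdf3_eq_pdf2_mul_stdPdf hr2]
  rw [integral_const_mul, integral_Iic_zero_stdPdf_mul_add hc, mul_assoc, mul_inv_cancel_left₀ hc.ne']
end

section
/- Let n ≥ 2, let x ∈ {0,1}ⁿ be a binary vector and y ∈ ℝⁿ arbitrary, and set n₀ = #{i : xᵢ = 0}. Then |K(x,y)| ≤ n₀·(n − n₀); equivalently, the sample Kendall's tau satisfies |τ(x,y)| ≤ 2·n₀·(n − n₀)/(n(n−1)). -/
/-!
Only pairs `i < j` with `xᵢ ≠ xⱼ` contribute to `K(x,y)`, each by at most `1` in absolute value.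
For binary `x` such a pair is an unordered pair made of a zero and a one of `x`, and there are
exactly `n₀ (n - n₀)` of those.
-/

open Real

/-- Kendall concordance sum `K(x,y) = Σ_{i<j} sgn(xᵢ−xⱼ)·sgn(yᵢ−yⱼ)`. -/
noncomputable def kendallK {n : ℕ} (x y : Fin n → ℝ) : ℝ :=
  ∑ i : Fin n, ∑ j : Fin n,
    if i < j then Real.sign (x i - x j) * Real.sign (y i - y j) else 0

open Finset

lemma abs_sign_mul_sign_le_one (a b : ℝ) : |Real.sign a * Real.sign b| ≤ 1 := by
  rcases Real.sign_apply_eq a with ha | ha | ha <;>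
    rcases Real.sign_apply_eq b with hb | hb | hb <;> simp [ha, hb]

lemma abs_kendallK_le_card_discordant {n : ℕ} (x y : Fin n → ℝ) :
    |kendallK x y| ≤ #{p : Fin n × Fin n | p.1 < p.2 ∧ x p.1 ≠ x p.2} := by
  have term_le (i j : Fin n) :
      |if i < j then Real.sign (x i - x j) * Real.sign (y i - y j) else 0| ≤
        if i < j ∧ x i ≠ x j then 1 else 0 := by
    by_cases hij : i < j
    · by_cases hx : x i = x j
      · simp [hx]
      · simpa [hij, hx] using abs_sign_mul_sign_le_one (x i - x j) (y i - y j)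
    · simp [hij]
  rw [kendallK, ← Fintype.sum_prod_type', natCast_card_filter]
  exact (abs_sum_le_sum_abs _ _).trans (sum_le_sum fun p _ => term_le p.1 p.2)

lemma card_discordant_le_of_binary {ι : Type*} [Fintype ι] [LinearOrder ι] {x : ι → ℝ}
    (hx : ∀ i, x i = 0 ∨ x i = 1) :
    #{p : ι × ι | p.1 < p.2 ∧ x p.1 ≠ x p.2} ≤ #{i | x i = 0} * #{i | x i ≠ 0} := by
  rw [← card_product]
  -- orient each discordant pair as (zero of `x`, one of `x`)
  refine card_le_card_of_injOn (fun p => if x p.1 = 0 then p else p.swap) ?_ ?_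
  · rintro ⟨i, j⟩ hp
    simp only [coe_filter, Set.mem_ofPred_eq] at hp
    rcases hx i with hi | hi <;> rcases hx j with hj | hj <;> simp_all
  · rintro ⟨i, j⟩ hp ⟨i', j'⟩ hp' h
    simp only [coe_filter, Set.mem_ofPred_eq] at hp hp'
    rcases hx i with hi | hi <;> rcases hx j with hj | hj <;>
      rcases hx i' with hi' | hi' <;> rcases hx j' with hj' | hj' <;>
      simp_all [Prod.ext_iff] <;> exact (lt_asymm hp hp').elim

lemma abs_div_choose_two_le {n : ℕ} {K B : ℝ} (h : |K| ≤ B) :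
    |K / n.choose 2| ≤ 2 * B / (n * (n - 1)) := by
  have hC : (0 : ℝ) ≤ n * (n - 1) := by
    have : (0 : ℝ) ≤ n.choose 2 := Nat.cast_nonneg _
    rw [Nat.cast_choose_two] at this
    linarith
  rw [abs_div, Nat.abs_cast, Nat.cast_choose_two, div_div_eq_mul_div, mul_comm]
  gcongr

theorem kendall_tau_bound_BC_general (n : ℕ) (x y : Fin n → ℝ)
    (hx : ∀ i, x i = 0 ∨ x i = 1) :
    |kendallK x y| ≤
        (Set.ncard {i : Fin n | x i = 0} : ℝ) *
          ((n : ℝ) - (Set.ncard {i : Fin n | x i = 0} : ℝ)) ∧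
      |kendallK x y / (n.choose 2 : ℝ)| ≤
        2 * (Set.ncard {i : Fin n | x i = 0} : ℝ) *
          ((n : ℝ) - (Set.ncard {i : Fin n | x i = 0} : ℝ)) /
            ((n : ℝ) * ((n : ℝ) - 1)) := by
  have hzeros : Set.ncard {i : Fin n | x i = 0} = #{i | x i = 0} := by
    rw [Set.ncard_eq_toFinset_card', Set.toFinset_ofPred]
  have hnonzeros : (#{i | x i ≠ 0} : ℝ) = n - #{i | x i = 0} := by
    rw [eq_sub_iff_add_eq, ← Nat.cast_add, add_comm, card_filter_add_card_filter_not,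
      card_univ, Fintype.card_fin]
  have hK : |kendallK x y| ≤ (#{i | x i = 0} : ℝ) * (n - #{i | x i = 0}) := by
    rw [← hnonzeros, ← Nat.cast_mul]
    exact (abs_kendallK_le_card_discordant x y).trans
      (Nat.cast_le.mpr (card_discordant_le_of_binary hx))
  rw [hzeros, mul_assoc]
  exact ⟨hK, abs_div_choose_two_le hK⟩

/-- Bound on Kendall's concordance sum (hence on sample Kendall's tau) when `x` is a
binary vector with `n₀` zeros: `|K(x,y)| ≤ n₀(n−n₀)` and
`|τ(x,y)| ≤ 2n₀(n−n₀)/(n(n−1))`. -/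
theorem kendall_tau_bound_BC (n : ℕ) (hn : 2 ≤ n) (x y : Fin n → ℝ)
    (hx : ∀ i, x i = 0 ∨ x i = 1) :
    |kendallK x y| ≤
        (Set.ncard {i : Fin n | x i = 0} : ℝ) *
          ((n : ℝ) - (Set.ncard {i : Fin n | x i = 0} : ℝ)) ∧
      |kendallK x y / (n.choose 2 : ℝ)| ≤
        2 * (Set.ncard {i : Fin n | x i = 0} : ℝ) *
          ((n : ℝ) - (Set.ncard {i : Fin n | x i = 0} : ℝ)) /
            ((n : ℝ) * ((n : ℝ) - 1)) :=
  kendall_tau_bound_BC_general n x y hx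
end
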